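/- Let ρ1 and ρ2 be n×n density matrices with eigenvalues λ_1(ρ1) ≥ … ≥ λ_n(ρ1) and λ_1(ρ2) ≥ … ≥ λ_n(ρ2). Then the minimum of F(ρ1, Φ(ρ2)) over all unital quantum channels Φ equals Σ_{j=1}^n √(λ_j(ρ1)) √(λ_{n−j+1}(ρ2)); that is, F(ρ1, Φ(ρ2)) ≥ Σ_{j=1}^n √(λ_j(ρ1) λ_{n−j+1}(ρ2)) for every unital channel Φ, with equality attained by a unitary channel. -/

import Mathlib

open Matrix
open scoped ComplexOrder Classical

/-- The vector of a tuple's entries sorted in decreasing (nonincreasing) order. -/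
noncomputable def sortDec {n : ℕ} (x : Fin n → ℝ) : Fin n → ℝ :=
  fun i => x (Tuple.sort x i.rev)

/-- The eigenvalues of a Hermitian matrix arranged in decreasing order,
`λ(A)`; junk value `0` if `A` is not Hermitian. -/
noncomputable def eigsDec {n : ℕ} (A : Matrix (Fin n) (Fin n) ℂ) : Fin n → ℝ :=
  if hA : A.IsHermitian then sortDec hA.eigenvalues else 0

/-- The eigenvalues of a Hermitian matrix arranged in increasing order. -/
noncomputable def eigsInc {n : ℕ} (A : Matrix (Fin n) (Fin n) ℂ) : Fin n → ℝ :=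
  fun i => eigsDec A i.rev

/-- `Λ↓(A)`: the diagonal matrix of the eigenvalues of `A` in decreasing order. -/
noncomputable def LambdaDown {n : ℕ} (A : Matrix (Fin n) (Fin n) ℂ) :
    Matrix (Fin n) (Fin n) ℂ :=
  Matrix.diagonal fun i => (eigsDec A i : ℂ)

/-- `Λ↑(A)`: the diagonal matrix of the eigenvalues of `A` in increasing order. -/
noncomputable def LambdaUp {n : ℕ} (A : Matrix (Fin n) (Fin n) ℂ) :
    Matrix (Fin n) (Fin n) ℂ :=
  Matrix.diagonal fun i => (eigsInc A i : ℂ)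

/-- `x ≺ y`: the sum of the `k` largest entries of `x` is at most that of `y`
for every `k`, with equality of the total sums. -/
def Majorizes {n : ℕ} (x y : Fin n → ℝ) : Prop :=
  (∀ k : ℕ, ∑ i ∈ Finset.univ.filter (fun i : Fin n => (i : ℕ) < k), sortDec x i ≤
      ∑ i ∈ Finset.univ.filter (fun i : Fin n => (i : ℕ) < k), sortDec y i) ∧
    (∑ i, x i) = ∑ i, y i

/-- A function `d` is Schur-convex if `x ≺ y` implies `d x ≤ d y`. -/
def SchurConvex {n : ℕ} (d : (Fin n → ℝ) → ℝ) : Prop :=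
  ∀ x y : Fin n → ℝ, Majorizes x y → d x ≤ d y

/-- A density matrix: positive semidefinite with trace one. -/
def IsDensityMatrix {n : ℕ} (ρ : Matrix (Fin n) (Fin n) ℂ) : Prop :=
  ρ.PosSemidef ∧ ρ.trace = 1

/-- A quantum channel: completely positive trace preserving map in Kraus form. -/
def IsQuantumChannel {n : ℕ}
    (Φ : Matrix (Fin n) (Fin n) ℂ → Matrix (Fin n) (Fin n) ℂ) : Prop :=
  ∃ (r : ℕ) (F : Fin r → Matrix (Fin n) (Fin n) ℂ),
    (∑ j, (F j)ᴴ * F j) = 1 ∧ ∀ X, Φ X = ∑ j, F j * X * (F j)ᴴ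

/-- A unital quantum channel. -/
def IsUnitalChannel {n : ℕ}
    (Φ : Matrix (Fin n) (Fin n) ℂ → Matrix (Fin n) (Fin n) ℂ) : Prop :=
  IsQuantumChannel Φ ∧ Φ 1 = 1

/-- A mixed unitary channel: a convex combination of unitary conjugations. -/
def IsMixedUnitaryChannel {n : ℕ}
    (Φ : Matrix (Fin n) (Fin n) ℂ → Matrix (Fin n) (Fin n) ℂ) : Prop :=
  ∃ (r : ℕ) (t : Fin r → ℝ) (U : Fin r → Matrix (Fin n) (Fin n) ℂ),
    (∀ j, 0 ≤ t j) ∧ (∑ j, t j) = 1 ∧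
      (∀ j, U j ∈ Matrix.unitaryGroup (Fin n) ℂ) ∧
      ∀ X, Φ X = ∑ j, (t j : ℂ) • (U j * X * (U j)ᴴ)

/-- Functional calculus: `f(A)` for a Hermitian matrix `A`, via the spectral theorem;
junk value `0` if `A` is not Hermitian. -/
noncomputable def matFun {n : ℕ} (f : ℝ → ℝ) (A : Matrix (Fin n) (Fin n) ℂ) :
    Matrix (Fin n) (Fin n) ℂ :=
  if hA : A.IsHermitian then
    (hA.eigenvectorUnitary : Matrix (Fin n) (Fin n) ℂ) *
      Matrix.diagonal (fun i => (f (hA.eigenvalues i) : ℂ)) *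
      (hA.eigenvectorUnitary : Matrix (Fin n) (Fin n) ℂ)ᴴ
  else 0

/-- The square root of a PSD matrix, as `Matrix.PosSemidef.sqrt` was defined in the older Mathlib. -/
noncomputable def posSemidefSqrtOld {n : ℕ} {A : Matrix (Fin n) (Fin n) ℂ} (hA : A.PosSemidef) :
    Matrix (Fin n) (Fin n) ℂ :=
  hA.1.eigenvectorUnitary.1 * diagonal ((↑) ∘ (√·) ∘ hA.1.eigenvalues) *
    (star hA.1.eigenvectorUnitary : Matrix (Fin n) (Fin n) ℂ)

/-- `|A| = (AᴴA)^{1/2}`. -/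
noncomputable def matAbs {n : ℕ} (A : Matrix (Fin n) (Fin n) ℂ) :
    Matrix (Fin n) (Fin n) ℂ :=
  posSemidefSqrtOld (Matrix.posSemidef_conjTranspose_mul_self A)

/-- `tr|A|`, the sum of the singular values of `A`. -/
noncomputable def traceAbs {n : ℕ} (A : Matrix (Fin n) (Fin n) ℂ) : ℝ :=
  ((matAbs A).trace).re

/-- The singular values of `A` in decreasing order. -/
noncomputable def singVals {n : ℕ} (A : Matrix (Fin n) (Fin n) ℂ) : Fin n → ℝ :=
  eigsDec (matAbs A)

/-- The positive semidefinite square root of a PSD matrix (junk value `0` otherwise). -/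
noncomputable def matSqrt {n : ℕ} (A : Matrix (Fin n) (Fin n) ℂ) :
    Matrix (Fin n) (Fin n) ℂ :=
  if hA : A.PosSemidef then posSemidefSqrtOld hA else 0

/-- The fidelity `F(ρ,σ) = tr|ρ^{1/2} σ^{1/2}|`. -/
noncomputable def fidelity {n : ℕ} (ρ σ : Matrix (Fin n) (Fin n) ℂ) : ℝ :=
  traceAbs (matSqrt ρ * matSqrt σ)

/-- The relative entropy `S(ρ‖σ) = tr(ρ (log ρ - log σ))`. -/
noncomputable def relEntropy {n : ℕ} (ρ σ : Matrix (Fin n) (Fin n) ℂ) : ℝ :=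
  ((ρ * (matFun Real.log ρ - matFun Real.log σ)).trace).re

/-- The (real) trace of a matrix whose trace is real. -/
noncomputable def trR {n : ℕ} (A : Matrix (Fin n) (Fin n) ℂ) : ℝ := A.trace.re


/-!
Write `Φ σ = ∑ⱼ Fⱼ σ Fⱼᴴ`. Since `Φ` is unital, its dual maps the projection onto the `k`
lowest eigenvectors of `Φ σ` to an effect of trace `k`, so by Ky Fan's minimum principle the sum of
the `k` smallest eigenvalues of `σ` is at most that of `Φ σ`. Tangent lines of `√`, whose slopes
decrease, and Abel summation carry this over to the eigenvalues of `√(Φ σ)`; by Schur's inequality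
the diagonal of `√(Φ σ)` in an eigenbasis of `ρ` dominates those in the same sense. A last Abel
summation against the decreasing weights `√λⱼ(ρ)` gives
`∑ⱼ √λⱼ(ρ) √λ↑ⱼ(σ) ≤ Re tr (√ρ √(Φ σ)) ≤ tr |√ρ √(Φ σ)|`.
Equality holds for the unitary carrying the increasing eigenbasis of `σ` onto the decreasing
eigenbasis of `ρ`: then `√ρ √(U σ Uᴴ)` is positive semidefinite with the required trace.
-/

namespace MinFidelity

section PrefixSum

variable {n : ℕ}

noncomputable def prefixSum (f : Fin n → ℝ) (k : ℕ) : ℝ :=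
  ∑ i ∈ Finset.univ.filter (fun i : Fin n => (i : ℕ) < k), f i

lemma prefixSum_zero (f : Fin n → ℝ) : prefixSum f 0 = 0 := by
  simp [prefixSum]

lemma prefixSum_succ (f : Fin n → ℝ) {k : ℕ} (hk : k < n) :
    prefixSum f (k + 1) = prefixSum f k + f ⟨k, hk⟩ := by
  have hset : Finset.univ.filter (fun i : Fin n => (i : ℕ) < k + 1) =
      insert ⟨k, hk⟩ (Finset.univ.filter (fun i : Fin n => (i : ℕ) < k)) := by
    ext i
    simp only [Finset.mem_filter, Finset.mem_univ, true_and, Finset.mem_insert, Fin.ext_iff]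
    omega
  rw [prefixSum, hset, Finset.sum_insert (by simp), add_comm, prefixSum]

lemma prefixSum_of_le (f : Fin n → ℝ) {k : ℕ} (hk : n ≤ k) : prefixSum f k = ∑ i, f i := by
  rw [prefixSum, Finset.filter_true_of_mem fun i _ => i.2.trans_le hk]

lemma prefixSum_min (f : Fin n → ℝ) (k : ℕ) : prefixSum f (min k n) = prefixSum f k := by
  rcases le_total k n with hk | hk
  · rw [min_eq_left hk]
  · rw [min_eq_right hk, prefixSum_of_le f le_rfl, prefixSum_of_le f hk]

lemma prefixSum_sub (f g : Fin n → ℝ) (k : ℕ) :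
    prefixSum (fun i => f i - g i) k = prefixSum f k - prefixSum g k :=
  Finset.sum_sub_distrib _ _

lemma prefixSum_le_prefixSum {f g : Fin n → ℝ} (h : ∀ i, f i ≤ g i) (k : ℕ) :
    prefixSum f k ≤ prefixSum g k :=
  Finset.sum_le_sum fun i _ => h i

lemma prefixSum_eq_sum_ite (f : Fin n → ℝ) (k : ℕ) :
    prefixSum f k = ∑ i : Fin n, (if (i : ℕ) < k then 1 else 0) * f i := by
  simp [prefixSum, Finset.sum_filter]

lemma sum_ite_lt {k : ℕ} (hk : k ≤ n) : ∑ i : Fin n, (if (i : ℕ) < k then (1 : ℝ) else 0) = k := by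
  rw [Finset.sum_ite, Finset.sum_const_zero, add_zero, Finset.sum_const, nsmul_one,
    Fin.card_filter_val_lt, min_eq_right hk]

/-- Abel summation. -/
theorem prefixSum_mul_nonneg {w e : Fin n → ℝ} (hw : Antitone w) (hw0 : ∀ i, 0 ≤ w i)
    (he : ∀ k, 0 ≤ prefixSum e k) (k : ℕ) : 0 ≤ prefixSum (fun i => w i * e i) k := by
  suffices key : ∀ c, 0 ≤ c → (∀ i : Fin n, (i : ℕ) < k → c ≤ w i) →
      c * prefixSum e k ≤ prefixSum (fun i => w i * e i) k from
    by simpa using key 0 le_rfl fun i _ => hw0 i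
  induction k with
  | zero => simp [prefixSum_zero]
  | succ k ih =>
    intro c hc hcw
    by_cases hk : k < n
    · have hwk : w ⟨k, hk⟩ * prefixSum e k ≤ prefixSum (fun i => w i * e i) k :=
        ih _ (hw0 _) fun i hi => hw (Fin.mk_le_mk.mpr hi.le)
      have hck : c ≤ w ⟨k, hk⟩ := hcw _ (Nat.lt_succ_self k)
      have hek : 0 ≤ prefixSum e k + e ⟨k, hk⟩ := prefixSum_succ e hk ▸ he (k + 1)
      rw [prefixSum_succ _ hk, prefixSum_succ _ hk]
      nlinarith
    · rw [prefixSum_of_le _ (by omega), prefixSum_of_le _ (by omega),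
        ← prefixSum_of_le _ (not_lt.mp hk), ← prefixSum_of_le _ (not_lt.mp hk)]
      exact ih c hc fun i _ => hcw i (by omega)

theorem sum_mul_le_sum_mul_of_prefixSum_le {w x y : Fin n → ℝ} (hw : Antitone w)
    (hw0 : ∀ i, 0 ≤ w i) (hxy : ∀ k, prefixSum x k ≤ prefixSum y k) :
    ∑ i, w i * x i ≤ ∑ i, w i * y i := by
  have h := prefixSum_mul_nonneg hw hw0 (e := fun i => y i - x i)
    (fun k => by rw [prefixSum_sub]; linarith [hxy k]) n
  simp only [prefixSum_of_le _ le_rfl, mul_sub, Finset.sum_sub_distrib] at h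
  linarith

theorem prefixSum_le_sum_mul {b c : Fin n → ℝ} (hb : Monotone b) (hc0 : ∀ i, 0 ≤ c i)
    (hc1 : ∀ i, c i ≤ 1) {k : ℕ} (hk : k ≤ n) (hc : ∑ i, c i = k) :
    prefixSum b k ≤ ∑ i, c i * b i := by
  obtain ⟨t, hlt, hge⟩ : ∃ t, (∀ i : Fin n, (i : ℕ) < k → b i ≤ t) ∧
      ∀ i : Fin n, k ≤ (i : ℕ) → t ≤ b i := by
    by_cases hkn : k < n
    · exact ⟨b ⟨k, hkn⟩, fun i hi => hb (Fin.mk_le_mk.mpr hi.le),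
        fun i hi => hb (Fin.mk_le_mk.mpr hi)⟩
    · obtain ⟨t, ht⟩ := (Set.finite_range b).bddAbove
      exact ⟨t, fun i _ => ht ⟨i, rfl⟩, fun i hi => absurd i.2 (by omega)⟩
  have hterm : ∀ i : Fin n, 0 ≤ (c i - if (i : ℕ) < k then 1 else 0) * (b i - t) := by
    intro i
    split_ifs with hi
    · exact mul_nonneg_of_nonpos_of_nonpos (by linarith [hc1 i]) (by linarith [hlt i hi])
    · exact mul_nonneg (by linarith [hc0 i]) (by linarith [hge i (not_lt.mp hi)])
  have hsum := Finset.sum_nonneg fun i (_ : i ∈ Finset.univ) => hterm i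
  simp only [sub_mul, mul_sub, Finset.sum_sub_distrib, ← Finset.sum_mul, hc, sum_ite_lt hk]
    at hsum
  rw [prefixSum_eq_sum_ite]
  linarith

lemma sub_div_two_sqrt_le_sqrt_sub {x y : ℝ} (hx : 0 ≤ x) (hy : 0 < y) :
    (y - x) / (2 * √y) ≤ √y - √x := by
  have hsy := Real.sqrt_pos.mpr hy
  rw [div_le_iff₀ (by positivity)]
  nlinarith [Real.sq_sqrt hx, Real.sq_sqrt hy.le, sq_nonneg (√y - √x)]

lemma eq_zero_of_prefixSum_le {μ ν : Fin n → ℝ} (hν : Monotone ν) (hμ0 : ∀ i, 0 ≤ μ i)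
    (h : ∀ k, prefixSum μ k ≤ prefixSum ν k) {i : Fin n} (hi : ν i = 0) : μ i = 0 := by
  have hνi : prefixSum ν (i + 1) ≤ 0 := Finset.sum_nonpos fun j hj =>
    hi ▸ hν (Fin.mk_le_mk.mpr (Nat.lt_succ_iff.mp (Finset.mem_filter.mp hj).2))
  have hμi : μ i ≤ prefixSum μ (i + 1) :=
    Finset.single_le_sum (fun j _ => hμ0 j) (by simp)
  linarith [hμ0 i, h (i + 1)]

theorem prefixSum_sqrt_le {μ ν : Fin n → ℝ} (hν : Monotone ν) (hμ0 : ∀ i, 0 ≤ μ i)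
    (hν0 : ∀ i, 0 ≤ ν i) (h : ∀ k, prefixSum μ k ≤ prefixSum ν k) (k : ℕ) :
    prefixSum (fun i => √(μ i)) k ≤ prefixSum (fun i => √(ν i)) k := by
  -- tangent-line slopes of `√` at `ν i`; on the zero block any large enough constant will do
  set D := ∑ i, (2 * √(ν i))⁻¹
  set δ : Fin n → ℝ := fun i => if ν i = 0 then D else (2 * √(ν i))⁻¹
  have hδ0 : ∀ i, 0 ≤ δ i := fun i => by
    by_cases hi : ν i = 0 <;> simp only [δ, hi, if_true, if_false] <;> positivity
  have hδ : Antitone δ := by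
    intro i j hij
    by_cases hj : ν j = 0
    · have hi : ν i = 0 := le_antisymm (hj ▸ hν hij) (hν0 i)
      simp [δ, hi, hj]
    by_cases hi : ν i = 0
    · simp only [δ, hi, hj, if_true, if_false]
      exact Finset.single_le_sum (f := fun i => (2 * √(ν i))⁻¹) (fun _ _ => by positivity)
        (Finset.mem_univ j)
    · simp only [δ, hi, hj, if_false]
      have := Real.sqrt_pos.mpr ((hν0 i).lt_of_ne' hi)
      gcongr
      exact hν hij
  have htangent : ∀ i, δ i * (ν i - μ i) ≤ √(ν i) - √(μ i) := by
    intro i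
    by_cases hi : ν i = 0
    · simp [δ, hi, eq_zero_of_prefixSum_le hν hμ0 h hi]
    · simpa [δ, hi, div_eq_inv_mul] using
        sub_div_two_sqrt_le_sqrt_sub (hμ0 i) ((hν0 i).lt_of_ne' hi)
  have habel := prefixSum_mul_nonneg hδ hδ0 (e := fun i => ν i - μ i)
    (fun k => by rw [prefixSum_sub]; linarith [h k]) k
  have hsqrt := habel.trans (prefixSum_le_prefixSum htangent k)
  rw [prefixSum_sub] at hsqrt
  linarith

end PrefixSum

section ConjDiag

variable {n : ℕ} {W : Matrix (Fin n) (Fin n) ℂ}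

noncomputable def conjDiag (W : Matrix (Fin n) (Fin n) ℂ) (d : Fin n → ℝ) :
    Matrix (Fin n) (Fin n) ℂ :=
  W * diagonal (fun i => (d i : ℂ)) * Wᴴ

lemma conjTranspose_mul_self_of_mem (hW : W ∈ unitaryGroup (Fin n) ℂ) : Wᴴ * W = 1 :=
  Unitary.star_mul_self_of_mem hW

lemma mul_conjTranspose_self_of_mem (hW : W ∈ unitaryGroup (Fin n) ℂ) : W * Wᴴ = 1 :=
  Unitary.mul_star_self_of_mem hW

lemma conjTranspose_mul_conjDiag_mul (hW : W ∈ unitaryGroup (Fin n) ℂ) (d : Fin n → ℝ) :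
    Wᴴ * conjDiag W d * W = diagonal (fun i => (d i : ℂ)) := by
  simp only [conjDiag, ← Matrix.mul_assoc, conjTranspose_mul_self_of_mem hW, Matrix.one_mul]
  rw [Matrix.mul_assoc, conjTranspose_mul_self_of_mem hW, Matrix.mul_one]

lemma conjDiag_mul_conjDiag (hW : W ∈ unitaryGroup (Fin n) ℂ) (d e : Fin n → ℝ) :
    conjDiag W d * conjDiag W e = conjDiag W (fun i => d i * e i) := by
  calc conjDiag W d * conjDiag W e
      = W * diagonal (fun i => (d i : ℂ)) * (Wᴴ * W) * diagonal (fun i => (e i : ℂ)) * Wᴴ := by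
        simp only [conjDiag, Matrix.mul_assoc]
    _ = conjDiag W (fun i => d i * e i) := by
        rw [conjTranspose_mul_self_of_mem hW, Matrix.mul_one, Matrix.mul_assoc W,
          diagonal_mul_diagonal]
        simp only [conjDiag, Complex.ofReal_mul]

lemma trace_conjDiag_mul (W : Matrix (Fin n) (Fin n) ℂ) (d : Fin n → ℝ)
    (X : Matrix (Fin n) (Fin n) ℂ) :
    (conjDiag W d * X).trace = ∑ i, (d i : ℂ) * (Wᴴ * X * W) i i := by
  calc (conjDiag W d * X).trace = (W * (diagonal (fun i => (d i : ℂ)) * (Wᴴ * X))).trace := by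
        simp only [conjDiag, Matrix.mul_assoc]
    _ = (diagonal (fun i => (d i : ℂ)) * (Wᴴ * X * W)).trace := by
        rw [trace_mul_comm, Matrix.mul_assoc, Matrix.mul_assoc]
    _ = ∑ i, (d i : ℂ) * (Wᴴ * X * W) i i := by simp [Matrix.trace, diagonal_mul]

lemma trace_conjDiag (hW : W ∈ unitaryGroup (Fin n) ℂ) (d : Fin n → ℝ) :
    (conjDiag W d).trace = ∑ i, (d i : ℂ) := by
  simpa [conjTranspose_mul_self_of_mem hW] using trace_conjDiag_mul W d 1

lemma posSemidef_conjDiag (W : Matrix (Fin n) (Fin n) ℂ) {d : Fin n → ℝ} (hd : ∀ i, 0 ≤ d i) :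
    (conjDiag W d).PosSemidef :=
  (PosSemidef.diagonal fun i => Complex.zero_le_real.mpr (hd i)).mul_mul_conjTranspose_same W

lemma one_sub_conjDiag (hW : W ∈ unitaryGroup (Fin n) ℂ) (d : Fin n → ℝ) :
    1 - conjDiag W d = conjDiag W (fun i => 1 - d i) := by
  have hdiag : diagonal (fun i => ((1 - d i : ℝ) : ℂ)) = 1 - diagonal (fun i => (d i : ℂ)) := by
    simp [← diagonal_one, diagonal_sub]
  rw [conjDiag, conjDiag, hdiag, Matrix.mul_sub, Matrix.sub_mul, Matrix.mul_one,
    mul_conjTranspose_self_of_mem hW]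

end ConjDiag

section Spectral

variable {n : ℕ} {W : Matrix (Fin n) (Fin n) ℂ}

open scoped MatrixOrder in
lemma eq_posSemidefSqrtOld_of_mul_self_eq {A B : Matrix (Fin n) (Fin n) ℂ} (hA : A.PosSemidef)
    (hB : B.PosSemidef) (hBA : B * B = A) : B = posSemidefSqrtOld hA := by
  have hsqrt : posSemidefSqrtOld hA = CFC.sqrt A := by
    rw [CFC.sqrt_eq_cfc, cfc_nnreal_eq_real _ A hA.nonneg, hA.1.cfc_eq, IsHermitian.cfc,
      posSemidefSqrtOld, Unitary.conjStarAlgAut_apply]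
    congr 2
    ext i j
    simp only [diagonal_apply, Function.comp_apply, Real.coe_sqrt, Real.coe_toNNReal',
      max_eq_left (hA.eigenvalues_nonneg i)]
    split_ifs <;> rfl
  rw [hsqrt]
  exact ((CFC.sqrt_eq_iff A B hA.nonneg hB.nonneg).mpr hBA).symm

lemma matSqrt_eq_conjDiag_sqrt {A : Matrix (Fin n) (Fin n) ℂ} (hW : W ∈ unitaryGroup (Fin n) ℂ)
    {d : Fin n → ℝ} (hd : ∀ i, 0 ≤ d i) (hA : A = conjDiag W d) :
    matSqrt A = conjDiag W (fun i => √(d i)) := by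
  subst hA
  rw [matSqrt, dif_pos (posSemidef_conjDiag W hd)]
  refine (eq_posSemidefSqrtOld_of_mul_self_eq _ (posSemidef_conjDiag W fun i => ?_) ?_).symm
  · exact Real.sqrt_nonneg _
  · simp only [conjDiag_mul_conjDiag hW, Real.mul_self_sqrt (hd _)]

lemma matAbs_of_posSemidef {X : Matrix (Fin n) (Fin n) ℂ} (hX : X.PosSemidef) : matAbs X = X :=
  (eq_posSemidefSqrtOld_of_mul_self_eq _ hX (by rw [hX.isHermitian.eq])).symm

lemma posSemidefSqrtOld_eq_conjDiag {A : Matrix (Fin n) (Fin n) ℂ} (hA : A.PosSemidef) :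
    posSemidefSqrtOld hA =
      conjDiag hA.1.eigenvectorUnitary (fun i => √(hA.1.eigenvalues i)) :=
  rfl

lemma eq_conjDiag_eigenvalues {A : Matrix (Fin n) (Fin n) ℂ} (hA : A.IsHermitian) :
    A = conjDiag hA.eigenvectorUnitary hA.eigenvalues := by
  rw [conjDiag]
  nth_rw 1 [hA.spectral_theorem]
  rw [Unitary.conjStarAlgAut_apply]
  rfl

lemma sortDec_antitone (x : Fin n → ℝ) : Antitone (sortDec x) :=
  fun _ _ hij => Tuple.monotone_sort x (Fin.rev_le_rev.mpr hij)

lemma eigsDec_antitone (A : Matrix (Fin n) (Fin n) ℂ) : Antitone (eigsDec A) := by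
  unfold eigsDec
  split_ifs
  · exact sortDec_antitone _
  · exact antitone_const

lemma eigsInc_monotone (A : Matrix (Fin n) (Fin n) ℂ) : Monotone (eigsInc A) :=
  fun _ _ hij => eigsDec_antitone A (Fin.rev_le_rev.mpr hij)

lemma eigsDec_nonneg {A : Matrix (Fin n) (Fin n) ℂ} (hA : A.PosSemidef) (i : Fin n) :
    0 ≤ eigsDec A i := by
  rw [eigsDec, dif_pos hA.isHermitian]
  exact hA.eigenvalues_nonneg _

lemma eigsInc_nonneg {A : Matrix (Fin n) (Fin n) ℂ} (hA : A.PosSemidef) (i : Fin n) :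
    0 ≤ eigsInc A i :=
  eigsDec_nonneg hA _

lemma submatrix_id_mem_unitaryGroup (hW : W ∈ unitaryGroup (Fin n) ℂ) (σ : Equiv.Perm (Fin n)) :
    W.submatrix id σ ∈ unitaryGroup (Fin n) ℂ := by
  rw [mem_unitaryGroup_iff, star_eq_conjTranspose, conjTranspose_submatrix,
    submatrix_mul_equiv W Wᴴ id σ id, mul_conjTranspose_self_of_mem hW, submatrix_id_id]

lemma conjDiag_submatrix (W : Matrix (Fin n) (Fin n) ℂ) (d : Fin n → ℝ) (σ : Equiv.Perm (Fin n)) :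
    conjDiag (W.submatrix id σ) (fun i => d (σ i)) = conjDiag W d := by
  have hdiag : diagonal (fun i => (d (σ i) : ℂ)) = (diagonal fun i => (d i : ℂ)).submatrix σ σ :=
    (submatrix_diagonal_equiv (fun i => (d i : ℂ)) σ).symm
  rw [conjDiag, conjTranspose_submatrix, hdiag, submatrix_mul_equiv W _ id σ σ,
    submatrix_mul_equiv _ Wᴴ id σ id, submatrix_id_id, conjDiag]

theorem exists_eq_conjDiag_eigsDec_comp {A : Matrix (Fin n) (Fin n) ℂ}
    (hA : A.IsHermitian) (σ : Equiv.Perm (Fin n)) :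
    ∃ W ∈ unitaryGroup (Fin n) ℂ, A = conjDiag W (fun i => eigsDec A (σ i)) := by
  set U : Matrix (Fin n) (Fin n) ℂ := (hA.eigenvectorUnitary : Matrix (Fin n) (Fin n) ℂ)
  set τ := σ.trans (Fin.revPerm.trans (Tuple.sort hA.eigenvalues))
  refine ⟨U.submatrix id τ, submatrix_id_mem_unitaryGroup hA.eigenvectorUnitary.2 τ, ?_⟩
  have hτ : (fun i => eigsDec A (σ i)) = fun i => hA.eigenvalues (τ i) := by
    funext i
    rw [eigsDec, dif_pos hA]
    rfl
  rw [hτ, conjDiag_submatrix]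
  exact eq_conjDiag_eigenvalues hA

lemma exists_eq_conjDiag_eigsDec {A : Matrix (Fin n) (Fin n) ℂ}
    (hA : A.IsHermitian) : ∃ W ∈ unitaryGroup (Fin n) ℂ, A = conjDiag W (eigsDec A) :=
  exists_eq_conjDiag_eigsDec_comp hA (Equiv.refl _)

lemma exists_eq_conjDiag_eigsInc {A : Matrix (Fin n) (Fin n) ℂ}
    (hA : A.IsHermitian) : ∃ W ∈ unitaryGroup (Fin n) ℂ, A = conjDiag W (eigsInc A) :=
  exists_eq_conjDiag_eigsDec_comp hA Fin.revPerm

end Spectral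

section KyFan

variable {n : ℕ} {W : Matrix (Fin n) (Fin n) ℂ}

def IsEffect (C : Matrix (Fin n) (Fin n) ℂ) : Prop :=
  C.PosSemidef ∧ (1 - C).PosSemidef

lemma isEffect_conjDiag (hW : W ∈ unitaryGroup (Fin n) ℂ) {d : Fin n → ℝ} (hd0 : ∀ i, 0 ≤ d i)
    (hd1 : ∀ i, d i ≤ 1) : IsEffect (conjDiag W d) :=
  ⟨posSemidef_conjDiag W hd0,
    one_sub_conjDiag hW d ▸ posSemidef_conjDiag W fun i => sub_nonneg.mpr (hd1 i)⟩

lemma IsEffect.sum_conjTranspose_mul_mul {C : Matrix (Fin n) (Fin n) ℂ} (hC : IsEffect C)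
    {ι : Type*} [Fintype ι] {F : ι → Matrix (Fin n) (Fin n) ℂ} (hF : ∑ j, (F j)ᴴ * F j = 1) :
    IsEffect (∑ j, (F j)ᴴ * C * F j) := by
  refine ⟨posSemidef_sum _ fun j _ => hC.1.conjTranspose_mul_mul_same (F j), ?_⟩
  have h : 1 - ∑ j, (F j)ᴴ * C * F j = ∑ j, (F j)ᴴ * (1 - C) * F j := by
    simp only [Matrix.mul_sub, Matrix.sub_mul, Matrix.mul_one, Finset.sum_sub_distrib, hF]
  rw [h]
  exact posSemidef_sum _ fun j _ => hC.2.conjTranspose_mul_mul_same (F j)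

lemma IsEffect.conjTranspose_mul_mul {C : Matrix (Fin n) (Fin n) ℂ} (hC : IsEffect C)
    (hW : W ∈ unitaryGroup (Fin n) ℂ) : IsEffect (Wᴴ * C * W) := by
  simpa using hC.sum_conjTranspose_mul_mul (F := fun _ : Unit => W)
    (by simpa using conjTranspose_mul_self_of_mem hW)

lemma IsEffect.re_diag_mem {C : Matrix (Fin n) (Fin n) ℂ} (hC : IsEffect C) (i : Fin n) :
    0 ≤ (C i i).re ∧ (C i i).re ≤ 1 := by
  have h0 := Complex.nonneg_iff.mp (hC.1.diag_nonneg (i := i))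
  have h1 := Complex.nonneg_iff.mp (hC.2.diag_nonneg (i := i))
  simp only [Matrix.sub_apply, Matrix.one_apply_eq, Complex.sub_re, Complex.one_re] at h1
  exact ⟨h0.1, by linarith [h1.1]⟩

lemma trace_sum_conjTranspose_mul_mul_mul {ι : Type*} [Fintype ι]
    (F : ι → Matrix (Fin n) (Fin n) ℂ) (X Y : Matrix (Fin n) (Fin n) ℂ) :
    ((∑ j, (F j)ᴴ * X * F j) * Y).trace = (X * ∑ j, F j * Y * (F j)ᴴ).trace := by
  simp only [Finset.sum_mul, Finset.mul_sum, trace_sum]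
  refine Finset.sum_congr rfl fun j _ => ?_
  rw [show (F j)ᴴ * X * F j * Y = (F j)ᴴ * (X * (F j * Y)) by simp only [Matrix.mul_assoc],
    trace_mul_comm, Matrix.mul_assoc]

lemma re_trace_conjDiag_mul (W : Matrix (Fin n) (Fin n) ℂ) (d : Fin n → ℝ)
    (X : Matrix (Fin n) (Fin n) ℂ) :
    (conjDiag W d * X).trace.re = ∑ i, d i * ((Wᴴ * X * W) i i).re := by
  simp [trace_conjDiag_mul, Complex.re_sum]

/-- **Ky Fan's minimum principle**, with an effect in place of a rank-`k` projection. -/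
theorem prefixSum_le_re_trace_mul {B C V : Matrix (Fin n) (Fin n) ℂ} {b : Fin n → ℝ}
    (hV : V ∈ unitaryGroup (Fin n) ℂ) (hb : Monotone b) (hB : B = conjDiag V b)
    (hC : IsEffect C) {k : ℕ} (hk : k ≤ n) (htr : C.trace = k) :
    prefixSum b k ≤ (C * B).trace.re := by
  have hCV := hC.conjTranspose_mul_mul hV
  have hsum : ∑ i, ((Vᴴ * C * V) i i).re = k := by
    have htrCV : (Vᴴ * C * V).trace = k := by
      rw [trace_mul_cycle, mul_conjTranspose_self_of_mem hV, Matrix.one_mul, htr]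
    simpa [Matrix.trace, Complex.re_sum] using congrArg Complex.re htrCV
  rw [trace_mul_comm, hB, re_trace_conjDiag_mul]
  simp_rw [mul_comm (b _)]
  exact prefixSum_le_sum_mul hb (fun i => (hCV.re_diag_mem i).1) (fun i => (hCV.re_diag_mem i).2)
    hk hsum

noncomputable def prefixProj (W : Matrix (Fin n) (Fin n) ℂ) (k : ℕ) : Matrix (Fin n) (Fin n) ℂ :=
  conjDiag W fun i => if (i : ℕ) < k then 1 else 0

lemma isEffect_prefixProj (hW : W ∈ unitaryGroup (Fin n) ℂ) (k : ℕ) :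
    IsEffect (prefixProj W k) :=
  isEffect_conjDiag hW (fun i => by split_ifs <;> norm_num) (fun i => by split_ifs <;> norm_num)

lemma trace_prefixProj (hW : W ∈ unitaryGroup (Fin n) ℂ) {k : ℕ} (hk : k ≤ n) :
    (prefixProj W k).trace = k := by
  rw [prefixProj, trace_conjDiag hW, ← Complex.ofReal_sum, sum_ite_lt hk, Complex.ofReal_natCast]

lemma re_trace_prefixProj_mul (W X : Matrix (Fin n) (Fin n) ℂ) (k : ℕ) :
    (prefixProj W k * X).trace.re = prefixSum (fun i => ((Wᴴ * X * W) i i).re) k := by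
  rw [prefixProj, re_trace_conjDiag_mul, prefixSum_eq_sum_ite]

/-- **Schur's theorem**: the spectrum majorises the diagonal. -/
theorem prefixSum_le_prefixSum_re_diag {B V : Matrix (Fin n) (Fin n) ℂ} {b : Fin n → ℝ}
    (hV : V ∈ unitaryGroup (Fin n) ℂ) (hb : Monotone b) (hB : B = conjDiag V b)
    (hW : W ∈ unitaryGroup (Fin n) ℂ) (k : ℕ) :
    prefixSum b k ≤ prefixSum (fun i => ((Wᴴ * B * W) i i).re) k := by
  rw [← prefixSum_min b, ← prefixSum_min (fun i => ((Wᴴ * B * W) i i).re),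
    ← re_trace_prefixProj_mul]
  exact prefixSum_le_re_trace_mul hV hb hB (isEffect_prefixProj hW _) (min_le_right _ _)
    (trace_prefixProj hW (min_le_right _ _))

theorem prefixSum_eigsInc_le_kraus_sum {ρ : Matrix (Fin n) (Fin n) ℂ} (hρ : ρ.IsHermitian)
    {ι : Type*} [Fintype ι] {F : ι → Matrix (Fin n) (Fin n) ℂ}
    (hTP : ∑ j, (F j)ᴴ * F j = 1) (hUn : ∑ j, F j * (F j)ᴴ = 1) (k : ℕ) :
    prefixSum (eigsInc ρ) k ≤ prefixSum (eigsInc (∑ j, F j * ρ * (F j)ᴴ)) k := by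
  set τ := ∑ j, F j * ρ * (F j)ᴴ
  have hτ : τ.IsHermitian :=
    isSelfAdjoint_sum _ fun j _ => isHermitian_mul_mul_conjTranspose (F j) hρ
  obtain ⟨W, hW, hρW⟩ := exists_eq_conjDiag_eigsInc hρ
  obtain ⟨V, hV, hτV⟩ := exists_eq_conjDiag_eigsInc hτ
  rw [← prefixSum_min, ← prefixSum_min (eigsInc τ)]
  set P := prefixProj V (min k n)
  -- `C` is the image of `P` under the dual channel
  set C := ∑ j, (F j)ᴴ * P * F j
  have hC : IsEffect C := (isEffect_prefixProj hV _).sum_conjTranspose_mul_mul hTP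
  have htrC : C.trace = (min k n : ℕ) := by
    calc C.trace = (C * 1).trace := by rw [Matrix.mul_one]
      _ = (P * ∑ j, F j * 1 * (F j)ᴴ).trace := trace_sum_conjTranspose_mul_mul_mul F P 1
      _ = (min k n : ℕ) := by
        simp only [Matrix.mul_one, hUn]
        exact trace_prefixProj hV (min_le_right _ _)
  have hτdiag : Vᴴ * τ * V = diagonal (fun i => (eigsInc τ i : ℂ)) := by
    conv_lhs => rw [hτV]
    exact conjTranspose_mul_conjDiag_mul hV _
  calc prefixSum (eigsInc ρ) (min k n) ≤ (C * ρ).trace.re :=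
        prefixSum_le_re_trace_mul hW (eigsInc_monotone ρ) hρW hC (min_le_right _ _) htrC
    _ = (P * τ).trace.re := by rw [trace_sum_conjTranspose_mul_mul_mul]
    _ = prefixSum (eigsInc τ) (min k n) := by
        rw [re_trace_prefixProj_mul, hτdiag]
        simp

end KyFan

section Fidelity

variable {n : ℕ}

lemma re_conjTranspose_mul_self_apply {m p : Type*} [Fintype m] (A : Matrix m p ℂ) (i : p) :
    ((Aᴴ * A) i i).re = ∑ k, ‖A k i‖ ^ 2 := by
  simp [mul_apply, Complex.re_sum, Complex.conj_mul', ← Complex.ofReal_pow]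

lemma norm_conjTranspose_mul_apply_sq_le {m p q : Type*} [Fintype m] (A : Matrix m p ℂ)
    (B : Matrix m q ℂ) (i : p) (j : q) :
    ‖(Aᴴ * B) i j‖ ^ 2 ≤ ((Aᴴ * A) i i).re * ((Bᴴ * B) j j).re := by
  rw [re_conjTranspose_mul_self_apply, re_conjTranspose_mul_self_apply]
  calc ‖(Aᴴ * B) i j‖ ^ 2 ≤ (∑ k, ‖A k i‖ * ‖B k j‖) ^ 2 := by
        gcongr
        simpa [mul_apply] using norm_sum_le Finset.univ fun k => star (A k i) * B k j
    _ ≤ (∑ k, ‖A k i‖ ^ 2) * ∑ k, ‖B k j‖ ^ 2 := Finset.sum_mul_sq_le_sq_mul_sq _ _ _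

/-- In an eigenbasis `(uᵢ)` of `YᴴY`, Cauchy–Schwarz bounds
`|⟨uᵢ, Y uᵢ⟩|` by `‖Y uᵢ‖`, the `i`-th singular value. -/
theorem re_trace_le_traceAbs (Y : Matrix (Fin n) (Fin n) ℂ) : Y.trace.re ≤ traceAbs Y := by
  set hYY := posSemidef_conjTranspose_mul_self Y
  set U : Matrix (Fin n) (Fin n) ℂ := (hYY.1.eigenvectorUnitary : Matrix (Fin n) (Fin n) ℂ)
  have hU : U ∈ unitaryGroup (Fin n) ℂ := hYY.1.eigenvectorUnitary.2
  set ev := hYY.1.eigenvalues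
  have htr : traceAbs Y = ∑ i, √(ev i) := by
    rw [traceAbs, matAbs, posSemidefSqrtOld_eq_conjDiag, trace_conjDiag hU, ← Complex.ofReal_sum,
      Complex.ofReal_re]
  have hYU : (Y * U)ᴴ * (Y * U) = diagonal (fun i => (ev i : ℂ)) := by
    rw [conjTranspose_mul, Matrix.mul_assoc, ← Matrix.mul_assoc Yᴴ,
      eq_conjDiag_eigenvalues hYY.1, ← Matrix.mul_assoc, conjTranspose_mul_conjDiag_mul hU]
  have hentry : ∀ i, ‖(Uᴴ * (Y * U)) i i‖ ≤ √(ev i) := fun i => by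
    refine Real.le_sqrt_of_sq_le ((norm_conjTranspose_mul_apply_sq_le U (Y * U) i i).trans ?_)
    rw [conjTranspose_mul_self_of_mem hU, hYU]
    simp
  calc Y.trace.re = (Uᴴ * (Y * U)).trace.re := by
        rw [trace_mul_comm, Matrix.mul_assoc, mul_conjTranspose_self_of_mem hU, Matrix.mul_one]
    _ = ∑ i, ((Uᴴ * (Y * U)) i i).re := by simp [Matrix.trace, Complex.re_sum]
    _ ≤ ∑ i, ‖(Uᴴ * (Y * U)) i i‖ := Finset.sum_le_sum fun i _ => Complex.re_le_norm _
    _ ≤ traceAbs Y := htr ▸ Finset.sum_le_sum fun i _ => hentry i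

lemma traceAbs_of_posSemidef {X : Matrix (Fin n) (Fin n) ℂ} (hX : X.PosSemidef) :
    traceAbs X = X.trace.re := by
  rw [traceAbs, matAbs_of_posSemidef hX]

theorem sum_sqrt_mul_sqrt_eigsInc_le_fidelity {ρ σ : Matrix (Fin n) (Fin n) ℂ}
    (hρ : ρ.PosSemidef) (hσ : σ.PosSemidef)
    {Φ : Matrix (Fin n) (Fin n) ℂ → Matrix (Fin n) (Fin n) ℂ} (hΦ : IsUnitalChannel Φ) :
    ∑ j, √(eigsDec ρ j) * √(eigsInc σ j) ≤ fidelity ρ (Φ σ) := by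
  obtain ⟨⟨r, F, hTP, hΦF⟩, hunit⟩ := hΦ
  have hUn : ∑ j, F j * (F j)ᴴ = 1 := by simpa [hΦF] using hunit
  have hτ : (Φ σ).PosSemidef :=
    hΦF σ ▸ posSemidef_sum _ fun j _ => hσ.mul_mul_conjTranspose_same (F j)
  obtain ⟨W, hW, hρW⟩ := exists_eq_conjDiag_eigsDec hρ.1
  obtain ⟨V, hV, hτV⟩ := exists_eq_conjDiag_eigsInc hτ.1
  have hsqrtτ := matSqrt_eq_conjDiag_sqrt hV (eigsInc_nonneg hτ) hτV
  set q : Fin n → ℝ := fun i => ((Wᴴ * matSqrt (Φ σ) * W) i i).re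
  have hdom : ∀ k, prefixSum (fun i => √(eigsInc σ i)) k ≤ prefixSum q k := fun k =>
    (prefixSum_sqrt_le (eigsInc_monotone _) (eigsInc_nonneg hσ) (eigsInc_nonneg hτ)
      (hΦF σ ▸ prefixSum_eigsInc_le_kraus_sum hσ.1 hTP hUn) k).trans
    (prefixSum_le_prefixSum_re_diag hV
      (fun i j hij => Real.sqrt_le_sqrt (eigsInc_monotone _ hij)) hsqrtτ hW k)
  calc ∑ j, √(eigsDec ρ j) * √(eigsInc σ j) ≤ ∑ j, √(eigsDec ρ j) * q j :=
        sum_mul_le_sum_mul_of_prefixSum_le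
          (fun i j hij => Real.sqrt_le_sqrt (eigsDec_antitone ρ hij))
          (fun i => Real.sqrt_nonneg _) hdom
    _ = (matSqrt ρ * matSqrt (Φ σ)).trace.re := by
        rw [matSqrt_eq_conjDiag_sqrt hW (eigsDec_nonneg hρ) hρW, re_trace_conjDiag_mul]
    _ ≤ fidelity ρ (Φ σ) := re_trace_le_traceAbs _

theorem exists_unitary_fidelity_eq {ρ σ : Matrix (Fin n) (Fin n) ℂ}
    (hρ : ρ.PosSemidef) (hσ : σ.PosSemidef) :
    ∃ U ∈ unitaryGroup (Fin n) ℂ,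
      fidelity ρ (U * σ * Uᴴ) = ∑ j, √(eigsDec ρ j) * √(eigsInc σ j) := by
  obtain ⟨W, hW, hρW⟩ := exists_eq_conjDiag_eigsDec hρ.1
  obtain ⟨V, hV, hσV⟩ := exists_eq_conjDiag_eigsInc hσ.1
  refine ⟨W * Vᴴ, mul_mem hW (Unitary.star_mem hV), ?_⟩
  have hconj : W * Vᴴ * σ * (W * Vᴴ)ᴴ = conjDiag W (eigsInc σ) := by
    rw [conjTranspose_mul, conjTranspose_conjTranspose]
    calc W * Vᴴ * σ * (V * Wᴴ) = W * (Vᴴ * σ * V) * Wᴴ := by simp only [Matrix.mul_assoc]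
      _ = conjDiag W (eigsInc σ) := by
        conv_lhs => rw [hσV]
        rw [conjTranspose_mul_conjDiag_mul hV, conjDiag]
  have hprod : matSqrt ρ * matSqrt (W * Vᴴ * σ * (W * Vᴴ)ᴴ) =
      conjDiag W (fun i => √(eigsDec ρ i) * √(eigsInc σ i)) := by
    rw [matSqrt_eq_conjDiag_sqrt hW (eigsDec_nonneg hρ) hρW,
      matSqrt_eq_conjDiag_sqrt hW (eigsInc_nonneg hσ) hconj, conjDiag_mul_conjDiag hW]
  rw [fidelity, hprod, traceAbs_of_posSemidef (posSemidef_conjDiag W fun i => by positivity),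
    trace_conjDiag hW, ← Complex.ofReal_sum, Complex.ofReal_re]

end Fidelity

end MinFidelity

/-- The minimum of the fidelity `F(ρ1, Φ(ρ2))` over unital channels `Φ`
equals `Σ √(λ_j(ρ1)) √(λ_{n-j+1}(ρ2))`, attained by a unitary channel. -/
theorem stmt_14 {n : ℕ} (ρ1 ρ2 : Matrix (Fin n) (Fin n) ℂ)
    (h1 : IsDensityMatrix ρ1) (h2 : IsDensityMatrix ρ2) :
    (∀ Φ, IsUnitalChannel Φ →
        (∑ j, Real.sqrt (eigsDec ρ1 j) * Real.sqrt (eigsDec ρ2 j.rev)) ≤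
          fidelity ρ1 (Φ ρ2)) ∧
      ∃ U ∈ Matrix.unitaryGroup (Fin n) ℂ,
        fidelity ρ1 (U * ρ2 * Uᴴ) =
          ∑ j, Real.sqrt (eigsDec ρ1 j) * Real.sqrt (eigsDec ρ2 j.rev) :=
  ⟨fun _ hΦ => MinFidelity.sum_sqrt_mul_sqrt_eigsInc_le_fidelity h1.1 h2.1 hΦ,
    MinFidelity.exists_unitary_fidelity_eq h1.1 h2.1⟩
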